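/- arXiv:2602.18409 — 2 statements merged into one kernel-verified Lean document; each statement's English description precedes it below -/
import Mathlib

section
/- Let 𝒯 be a finite set of templates and fix a finite proposition set AP. A Boolean node classifier on finite pointed labelled graphs over AP is computed by some bounded 𝒯-GNN if and only if it is definable by some GML(𝒯) formula. That is, for every bounded 𝒯-GNN 𝒩 there is a GML(𝒯) formula φ with 𝒩(G,v)=1 ⟺ (G,v) ⊨ φ for all finite pointed graphs (G,v), and conversely for every GML(𝒯) formula φ there is a bounded 𝒯-GNN 𝒩 with the same property. -/
set_option maxHeartbeats 1000000

attribute [local instance 10] Classical.propDecidable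

/-- A template `T = (V, E⁺, E⁻, r)`: vertex set `Fin (n+1)` (cardinality `n+1`),
root `0`, edges `pos`, non-edges `neg`, with `pos ∩ neg = ∅`. -/
structure Template where
  n : ℕ
  pos : Finset (Fin (n + 1) × Fin (n + 1))
  neg : Finset (Fin (n + 1) × Fin (n + 1))
  disj : ∀ p, ¬(p ∈ pos ∧ p ∈ neg)

/-- A labelled directed graph with labels in `Λ`: a finite vertex set (a finite
subset of `ℕ`), an edge relation `E ⊆ V × V`, and a labelling of the nodes. -/
structure LGraph (Λ : Type) where
  verts : Finset ℕ
  edge : ℕ → ℕ → Prop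
  lab : ℕ → Λ
  edge_mem : ∀ u w, edge u w → u ∈ verts ∧ w ∈ verts

/-- `f` is a template embedding of `T` into the pointed graph `(G, w)`:
an injective map sending the root to `w`, `E⁺`-pairs to edges and `E⁻`-pairs to
non-edges. -/
def IsEmb {Λ : Type} (T : Template) (G : LGraph Λ) (w : ℕ) (f : Fin (T.n + 1) → ℕ) : Prop :=
  Function.Injective f ∧ f 0 = w ∧ (∀ i, f i ∈ G.verts) ∧
    (∀ p ∈ T.pos, G.edge (f p.1) (f p.2)) ∧ (∀ p ∈ T.neg, ¬ G.edge (f p.1) (f p.2))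

/-- The (finite) set `emb(T,(G,w))` of template embeddings of `T` into `(G, w)`. -/
noncomputable def embFinset {Λ : Type} (T : Template) (G : LGraph Λ) (w : ℕ) :
    Finset (Fin (T.n + 1) → ℕ) :=
  (Fintype.piFinset fun _ : Fin (T.n + 1) => G.verts).filter (IsEmb T G w)

/-- Forth condition: any `k` pairwise distinct template embeddings of `T` at `(G,v)`
can be matched by `k` pairwise distinct embeddings at `(G',v')`, pointwise related
by `Z`. -/
def Forth {Λ : Type} (Z : ℕ → ℕ → Prop) (T : Template) (G G' : LGraph Λ)
    (v v' : ℕ) (k : ℕ) : Prop :=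
  ∀ F : Fin k → (Fin (T.n + 1) → ℕ), Function.Injective F → (∀ i, IsEmb T G v (F i)) →
    ∃ F' : Fin k → (Fin (T.n + 1) → ℕ), Function.Injective F' ∧ (∀ i, IsEmb T G' v' (F' i)) ∧
      ∀ i u, Z (F i u) (F' i u)

/-- `Z` is a graded `l`-`𝒯`-bisimulation between `G` and `G'`, where the allowed
multiplicities `k` in the back-and-forth conditions are those satisfying `P`. -/
def IsBisimP {Λ : Type} (𝒯 : Finset Template) (P : ℕ → Prop) (G G' : LGraph Λ) :
    ℕ → (ℕ → ℕ → Prop) → Prop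
  | 0, Z => ∀ v v', Z v v' → G.lab v = G'.lab v'
  | l + 1, Z => ∃ Z', IsBisimP 𝒯 P G G' l Z' ∧
      ∀ v v', Z v v' → Z' v v' ∧ ∀ T ∈ 𝒯, ∀ k, P k →
        Forth Z' T G G' v v' k ∧ Forth (fun a b => Z' b a) T G' G v' v k

/-- `(G,v)` and `(G',v')` are graded `l`-`𝒯`-bisimilar. -/
def GBisimilar {Λ : Type} (𝒯 : Finset Template) (l : ℕ) (G : LGraph Λ) (v : ℕ)
    (G' : LGraph Λ) (v' : ℕ) : Prop :=
  ∃ Z, IsBisimP 𝒯 (fun k => 1 ≤ k) G G' l Z ∧ Z v v'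

/-- `(G,v)` and `(G',v')` are `l`-`c`-`𝒯`-bisimilar (multiplicities restricted to `k ≤ c`). -/
def BBisimilar {Λ : Type} (𝒯 : Finset Template) (l c : ℕ) (G : LGraph Λ) (v : ℕ)
    (G' : LGraph Λ) (v' : ℕ) : Prop :=
  ∃ Z, IsBisimP 𝒯 (fun k => 1 ≤ k ∧ k ≤ c) G G' l Z ∧ Z v v'

/-- `A↾c`: cap all multiplicities of a multiset at `c`. -/
noncomputable def mcap {α : Type} (c : ℕ) (m : Multiset α) : Multiset α :=
  m.toFinset.val.bind fun a => Multiset.replicate (min c (m.count a)) a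

/-- The `𝒯`-WL colouring of `G` after `l` rounds, using `hash0` for the initial
colouring and `hash` for the refinement rounds; at each round the new colour of `v`
hashes its previous colour together with, for each template `T ∈ 𝒯`, the multiset of
`T`-labelled colourings induced by the template embeddings at `v`. -/
noncomputable def colWL {Λ C : Type} (𝒯 : Finset Template) (hash0 : Λ → C)
    (hash : C → ((T : {x // x ∈ 𝒯}) → Multiset (Fin (T.1.n + 1) → C)) → C)
    (G : LGraph Λ) : ℕ → ℕ → C
  | 0, v => hash0 (G.lab v)
  | l + 1, v =>
      hash (colWL 𝒯 hash0 hash G l v)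
        (fun T => (embFinset T.1 G v).val.map
          (fun f => fun u => colWL 𝒯 hash0 hash G l (f u)))

/-- A multiset function is `c`-bounded if its value is unchanged when all
multiplicities larger than `c` are replaced by `c`. -/
def CBoundedFun {α β : Type} (c : ℕ) (g : Multiset α → β) : Prop :=
  ∀ m, g m = g (mcap c m)

/-- An `nAr`-ary `L`-layer `𝒯`-GNN with feature dimension `d`: templates from `𝒯`,
template-aggregation functions (invariant under root-fixing label-preserving template
automorphisms), outer multiset aggregation functions, combination functions, and a
Boolean classification function. -/
structure TGNN (𝒯 : Finset Template) (d nAr L : ℕ) where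
  temp : Fin L → Fin nAr → Template
  temp_mem : ∀ l j, temp l j ∈ 𝒯
  aggT : (l : Fin L) → (j : Fin nAr) → ((Fin ((temp l j).n + 1) → (Fin d → ℝ)) → (Fin d → ℝ))
  aggT_inv : ∀ (l : Fin L) (j : Fin nAr) (σ : Equiv.Perm (Fin ((temp l j).n + 1)))
      (lab₁ lab₂ : Fin ((temp l j).n + 1) → (Fin d → ℝ)),
      σ 0 = 0 →
      (∀ p : Fin ((temp l j).n + 1) × Fin ((temp l j).n + 1),
        p ∈ (temp l j).pos ↔ (σ p.1, σ p.2) ∈ (temp l j).pos) →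
      (∀ p : Fin ((temp l j).n + 1) × Fin ((temp l j).n + 1),
        p ∈ (temp l j).neg ↔ (σ p.1, σ p.2) ∈ (temp l j).neg) →
      (∀ u, u ≠ 0 → lab₁ u = lab₂ (σ u)) →
      aggT l j lab₁ = aggT l j lab₂
  agg : Fin L → Fin nAr → Multiset (Fin d → ℝ) → (Fin d → ℝ)
  comb : Fin L → (Fin d → ℝ) → (Fin nAr → (Fin d → ℝ)) → (Fin d → ℝ)
  cls : (Fin d → ℝ) → Bool

/-- The feature vector `λ^l(v)` of node `v` after `l` layers of the `𝒯`-GNN `N` on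
input graph `G`. -/
noncomputable def TGNN.feat {𝒯 : Finset Template} {d nAr L : ℕ} (N : TGNN 𝒯 d nAr L)
    (G : LGraph (Fin d → ℝ)) : ℕ → ℕ → (Fin d → ℝ)
  | 0, v => G.lab v
  | l + 1, v =>
      if h : l < L then
        N.comb ⟨l, h⟩ (N.feat G l v)
          (fun j => N.agg ⟨l, h⟩ j
            ((embFinset (N.temp ⟨l, h⟩ j) G v).val.map
              (fun f => N.aggT ⟨l, h⟩ j (fun u => N.feat G l (f u)))))
      else fun _ => 0

/-- A `𝒯`-GNN is `c`-bounded if all its outer aggregation functions are `c`-bounded. -/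
def TGNN.IsCBounded {𝒯 : Finset Template} {d nAr L : ℕ} (N : TGNN 𝒯 d nAr L) (c : ℕ) : Prop :=
  ∀ l j, CBoundedFun c (N.agg l j)

def boolToReal (b : Bool) : ℝ := if b then 1 else 0

/-- Identify a `{0,1}^d`-labelled graph with a real-vector labelled graph. -/
def LGraph.toReal {d : ℕ} (G : LGraph (Fin d → Bool)) : LGraph (Fin d → ℝ) :=
  ⟨G.verts, G.edge, fun v i => boolToReal (G.lab v i), G.edge_mem⟩

/-- Initialize real feature vectors of dimension `d'` from `{0,1}^a`-labels
(the first `a` coordinates hold the truth values of the propositions, the rest are `0`). -/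
def initG {a : ℕ} (d' : ℕ) (G : LGraph (Fin a → Bool)) : LGraph (Fin d' → ℝ) :=
  ⟨G.verts, G.edge, fun v i => if h : (i : ℕ) < a then boolToReal (G.lab v ⟨i, h⟩) else 0,
    G.edge_mem⟩

/-- Formulae of graded template modal logic `GML(𝒯)` over propositions `AP`
(`⊤` included; a modality `⟨T⟩^{≥j}(φ₁,…,φ_{n_T})` takes `n_T = |V_T| - 1` arguments). -/
inductive GML (AP : Type) : Type
  | top : GML AP
  | prop : AP → GML AP
  | neg : GML AP → GML AP
  | and : GML AP → GML AP → GML AP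
  | dia : (T : Template) → ℕ → (Fin T.n → GML AP) → GML AP

/-- Semantics of `GML(𝒯)` on pointed labelled graphs:
`(G,v) ⊨ ⟨T⟩^{≥j}(φ⃗)` iff at least `j` embeddings `f ∈ emb(T,(G,v))` satisfy
`(G, f(i)) ⊨ φᵢ` for all `1 ≤ i ≤ n_T`. -/
def Sat {AP : Type} (G : LGraph (AP → Bool)) : GML AP → ℕ → Prop
  | .top, _ => True
  | .prop p, v => G.lab v p = true
  | .neg φ, v => ¬ Sat G φ v
  | .and φ ψ, v => Sat G φ v ∧ Sat G ψ v
  | .dia T j φs, v =>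
      j ≤ ((embFinset T G v).filter
        (fun f => ∀ i : Fin T.n, Sat G (φs i) (f i.succ))).card

/-- Modal depth. -/
def GML.md {AP : Type} : GML AP → ℕ
  | .top => 0
  | .prop _ => 0
  | .neg φ => φ.md
  | .and φ ψ => max φ.md ψ.md
  | .dia _ _ φs => 1 + Finset.univ.sup fun i => (φs i).md

/-- Counting bound: the least `c` such that every modality `⟨T⟩^{≥j}` occurring in the
formula has `j ≤ c`. -/
def GML.cb {AP : Type} : GML AP → ℕ
  | .top => 0
  | .prop _ => 0
  | .neg φ => φ.cb
  | .and φ ψ => max φ.cb ψ.cb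
  | .dia _ j φs => max j (Finset.univ.sup fun i => (φs i).cb)

/-- Syntactic depth: counts both Boolean connectives and modalities along the deepest
branch of the syntax tree. -/
def GML.sd {AP : Type} : GML AP → ℕ
  | .top => 0
  | .prop _ => 0
  | .neg φ => 1 + φ.sd
  | .and φ ψ => 1 + max φ.sd ψ.sd
  | .dia _ _ φs => 1 + Finset.univ.sup fun i => (φs i).sd

/-- Well-formedness of a `GML(𝒯)` formula: all templates come from `𝒯` and all
grades satisfy `j ≥ 1`. -/
def GML.Wf {AP : Type} (𝒯 : Finset Template) : GML AP → Prop
  | .top => True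
  | .prop _ => True
  | .neg φ => φ.Wf 𝒯
  | .and φ ψ => φ.Wf 𝒯 ∧ ψ.Wf 𝒯
  | .dia T j φs => T ∈ 𝒯 ∧ 1 ≤ j ∧ ∀ i, (φs i).Wf 𝒯

/-- Finite conjunction (`⊤` for the empty list). -/
def bigConj {AP : Type} : List (GML AP) → GML AP
  | [] => .top
  | φ :: rest => .and φ (bigConj rest)

/-- `|S^{(G,v)}_{T,φ⃗}|`: the number of embeddings `f ∈ emb(T,(G,v))` with
`(G, f(i)) ⊨ φᵢ` for all `1 ≤ i ≤ n_T`. -/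
noncomputable def Scard {AP : Type} (G : LGraph (AP → Bool)) (T : Template) (v : ℕ)
    (φs : Fin T.n → GML AP) : ℕ :=
  ((embFinset T G v).filter (fun f => ∀ i : Fin T.n, Sat G (φs i) (f i.succ))).card

/-- The `l`-characteristic formula `χ^l_{(G,v)}`. -/
noncomputable def charU {AP : Type} [Fintype AP] (𝒯 : Finset Template) :
    ℕ → LGraph (AP → Bool) → ℕ → GML AP
  | 0 => fun G v =>
      bigConj ((Finset.univ : Finset AP).toList.map
        (fun p => if G.lab v p then GML.prop p else GML.neg (GML.prop p)))
  | l + 1 => fun G v =>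
      GML.and (charU 𝒯 l G v)
        (bigConj (𝒯.toList.map (fun T =>
          GML.and
            (bigConj ((embFinset T G v).toList.map (fun f =>
              GML.dia T (Scard G T v (fun i => charU 𝒯 l G (f i.succ)))
                (fun i => charU 𝒯 l G (f i.succ)))))
            (GML.neg (GML.dia T (Scard G T v (fun _ => GML.top) + 1)
              (fun _ => GML.top))))))

/-- `reps m` is a system of representatives for the `m`-`c`-`𝒯`-bisimilarity classes of
finite pointed labelled graphs: every representative is a genuine pointed graph, every
pointed graph is `m`-`c`-`𝒯`-bisimilar to some representative, and distinct
representatives are non-bisimilar. -/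
def RepSystem {AP : Type} (𝒯 : Finset Template) (c : ℕ)
    (reps : ℕ → Finset (LGraph (AP → Bool) × ℕ)) : Prop :=
  ∀ m : ℕ,
    (∀ q ∈ reps m, q.2 ∈ q.1.verts) ∧
    (∀ (G : LGraph (AP → Bool)) (v : ℕ), v ∈ G.verts →
      ∃ q ∈ reps m, BBisimilar 𝒯 m c q.1 q.2 G v) ∧
    (∀ q ∈ reps m, ∀ q' ∈ reps m, BBisimilar 𝒯 m c q.1 q.2 q'.1 q'.2 → q = q')

/-- The bounded `l`-`c`-characteristic formula `χ^{l,c}_{(G,v)}`, relative to a chosen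
system `reps` of representatives of the bounded bisimilarity classes. -/
noncomputable def charB {AP : Type} [Fintype AP] (𝒯 : Finset Template) (c : ℕ)
    (reps : ℕ → Finset (LGraph (AP → Bool) × ℕ)) :
    ℕ → LGraph (AP → Bool) → ℕ → GML AP
  | 0 => fun G v =>
      bigConj ((Finset.univ : Finset AP).toList.map
        (fun p => if G.lab v p then GML.prop p else GML.neg (GML.prop p)))
  | l + 1 => fun G v =>
      GML.and (charB 𝒯 c reps l G v)
        (bigConj (𝒯.toList.map (fun T =>
          GML.and
            (bigConj ((embFinset T G v).toList.map (fun f =>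
              GML.dia T (min c (Scard G T v (fun i => charB 𝒯 c reps l G (f i.succ))))
                (fun i => charB 𝒯 c reps l G (f i.succ)))))
            (bigConj (((Fintype.piFinset (fun _ : Fin T.n => reps l)).filter
                (fun t => Scard G T v
                  (fun i => charB 𝒯 c reps l (t i).1 (t i).2) + 1 ≤ c)).toList.map
              (fun t => GML.neg (GML.dia T
                  (Scard G T v (fun i => charB 𝒯 c reps l (t i).1 (t i).2) + 1)
                  (fun i => charB 𝒯 c reps l (t i).1 (t i).2))))))))

/-- Standard graded forth condition on out-neighbours. -/
def StdForth {Λ : Type} (Z : ℕ → ℕ → Prop) (G G' : LGraph Λ) (v v' : ℕ) (k : ℕ) : Prop :=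
  ∀ us : Fin k → ℕ, Function.Injective us → (∀ i, G.edge v (us i)) →
    ∃ us' : Fin k → ℕ, Function.Injective us' ∧ (∀ i, G'.edge v' (us' i)) ∧
      ∀ i, Z (us i) (us' i)

/-- `Z` is a standard graded `l`-bisimulation (the relation underlying standard 1-WL
colour refinement). -/
def IsStdBisim {Λ : Type} (G G' : LGraph Λ) : ℕ → (ℕ → ℕ → Prop) → Prop
  | 0, Z => ∀ v v', Z v v' → G.lab v = G'.lab v'
  | l + 1, Z => ∃ Z', IsStdBisim G G' l Z' ∧
      ∀ v v', Z v v' → Z' v v' ∧ ∀ k, 1 ≤ k →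
        StdForth Z' G G' v v' k ∧ StdForth (fun a b => Z' b a) G' G v' v k

/-- `(G,v)` and `(G',v')` are standard graded `l`-bisimilar. -/
def StdBisimilar {Λ : Type} (l : ℕ) (G : LGraph Λ) (v : ℕ) (G' : LGraph Λ) (v' : ℕ) : Prop :=
  ∃ Z, IsStdBisim G G' l Z ∧ Z v v'

/-- The edge template `T₁ = ({r,a}, E⁺ = {(r,a)}, E⁻ = ∅, r)`. -/
def T1 : Template := ⟨1, {(0, 1)}, ∅, by decide⟩

/-- The triangle template `T△ = ({r,a,b}, E⁺ = {(r,a),(a,b),(b,r)}, E⁻ = ∅, r)`. -/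
def Ttri : Template := ⟨2, {(0, 1), (1, 2), (2, 0)}, ∅, by decide⟩

/-- The directed 3-cycle, all nodes with the same constant label. -/
def G3 : LGraph Unit where
  verts := {0, 1, 2}
  edge u w := (u = 0 ∧ w = 1) ∨ (u = 1 ∧ w = 2) ∨ (u = 2 ∧ w = 0)
  lab _ := ()
  edge_mem := by rintro u w (⟨rfl, rfl⟩ | ⟨rfl, rfl⟩ | ⟨rfl, rfl⟩) <;> simp

/-- The directed 6-cycle, all nodes with the same constant label. -/
def G6 : LGraph Unit where
  verts := Finset.range 6
  edge u w := u < 6 ∧ w = (u + 1) % 6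
  lab _ := ()
  edge_mem := by
    rintro u w ⟨hu, rfl⟩
    simp only [Finset.mem_range]
    omega

/-!
A bounded GNN distinguishes two nodes only through their labels and, layer by layer and
template by template, the numbers, capped at `c`, of embeddings whose non-root vertices carry
prescribed features. By induction on the layers, the features of layer `l` are therefore
constant on the cells of a finite partition of all pointed graphs into `GML(𝒯)`-definable
classes: refining a cell `ψ` by the capped counts `min c |S_{T,ψ⃗}|`, each pinned down by
graded modalities, gives the partition of layer `l + 1`. The classifier is then the
disjunction of its accepting cells.

Conversely, a formula `φ` is evaluated by a GNN with one feature coordinate per proposition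
and per diamond subformula of `φ`, layer `l` computing the diamonds of modal depth `≤ l`. To
make the template aggregation invariant under root automorphisms of `T`, it counts the
automorphisms `σ` for which `f ∘ σ` satisfies the arguments; summed over all embeddings `f`
this gives `|Aut T|` times `|S_{T,φ⃗}|`, and comparing that sum with `|Aut T| · j` only needs
multiplicities up to this threshold.
-/

open scoped Finset

section Multisets

theorem count_mcap {α : Type} [inst : DecidableEq α] (c : ℕ) (m : Multiset α) (b : α) :
    (mcap c m).count b = min c (m.count b) := by
  obtain rfl : inst = fun _ _ => Classical.propDecidable _ := Subsingleton.elim _ _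
  simp only [mcap, Multiset.count_bind, Multiset.count_replicate]
  convert Finset.sum_ite_eq' m.toFinset b fun a => min c (m.count a) using 1
  · rfl
  · by_cases hb : b ∈ m <;> simp [hb]

theorem mcap_idem {α : Type} (c : ℕ) (m : Multiset α) : mcap c (mcap c m) = mcap c m := by
  ext b
  simp only [count_mcap, ← min_assoc, min_self]

theorem mcap_map_of_injective {α β : Type} {u : α → β} (hu : Function.Injective u) (c : ℕ)
    (m : Multiset α) : mcap c (m.map u) = (mcap c m).map u := by
  ext b
  by_cases hb : b ∈ Set.range u
  · obtain ⟨x, rfl⟩ := hb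
    simp only [count_mcap, Multiset.count_map_eq_count' _ _ hu]
  · have hm : ∀ m' : Multiset α, (m'.map u).count b = 0 := fun m' =>
      Multiset.count_eq_zero.2 fun h => hb <| by
        obtain ⟨x, -, rfl⟩ := Multiset.mem_map.1 h
        exact ⟨x, rfl⟩
    rw [count_mcap, hm, hm, Nat.min_zero]

theorem min_mul_min_eq (c n x : ℕ) : min c (min c n * x) = min c (n * x) := by
  rcases Nat.eq_zero_or_pos x with rfl | hx
  · simp
  rcases le_total n c with h | h
  · rw [min_eq_right h]
  · rw [min_eq_left h, min_eq_left (Nat.le_mul_of_pos_right c hx),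
      min_eq_left (le_trans h (Nat.le_mul_of_pos_right n hx))]

theorem min_sum_min {ι : Type} (s : Finset ι) (c : ℕ) (u : ι → ℕ) :
    min c (∑ i ∈ s, min c (u i)) = min c (∑ i ∈ s, u i) := by
  by_cases h : ∃ i ∈ s, c ≤ u i
  · obtain ⟨i, hi, hci⟩ := h
    have hmin := Finset.single_le_sum (f := fun j => min c (u j)) (fun _ _ => Nat.zero_le _) hi
    have hsum := Finset.single_le_sum (f := u) (fun _ _ => Nat.zero_le _) hi
    simp only [min_eq_left hci] at hmin
    omega
  · simp only [not_exists, not_and, not_le] at h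
    rw [Finset.sum_congr rfl fun i hi => min_eq_right (h i hi).le]

theorem min_sum_mcap (c : ℕ) (m : Multiset ℕ) : min c (mcap c m).sum = min c m.sum := by
  have hsub : (mcap c m).toFinset ⊆ m.toFinset := fun x hx => by
    simp only [Multiset.mem_toFinset, ← Multiset.count_pos, count_mcap] at hx ⊢
    omega
  rw [Finset.sum_multiset_count_of_subset _ _ hsub, Finset.sum_multiset_count]
  simp only [count_mcap, smul_eq_mul]
  rw [← min_sum_min]
  simp only [min_mul_min_eq]
  rw [min_sum_min]

theorem mcap_sum_replicate_min {ι α : Type} (s : Finset ι) (c : ℕ) (n : ι → ℕ) (b : ι → α) :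
    mcap c (∑ i ∈ s, Multiset.replicate (min c (n i)) (b i))
      = mcap c (∑ i ∈ s, Multiset.replicate (n i) (b i)) := by
  ext x
  simp only [count_mcap, Multiset.count_sum', Multiset.count_replicate]
  rw [← min_sum_min s c fun i => if b i = x then n i else 0]
  congr 2 with i
  split_ifs <;> simp

theorem Finset.val_map_eq_sum_replicate_card_fiber {α ι β : Type} [Fintype ι] [DecidableEq ι]
    (s : Finset α) (k : α → ι) (b : ι → β) :
    s.val.map (fun x => b (k x)) = ∑ i, Multiset.replicate {x ∈ s | k x = i}.card (b i) := by
  calc s.val.map (fun x => b (k x)) = ∑ x ∈ s, {b (k x)} := by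
        rw [Finset.sum, ← Multiset.sum_map_singleton (s.val.map _), Multiset.map_map]
        rfl
    _ = ∑ i, ∑ x ∈ s with k x = i, {b (k x)} := (Finset.sum_fiberwise s k _).symm
    _ = _ := by
        refine Finset.sum_congr rfl fun i _ => ?_
        rw [Finset.sum_congr rfl fun x hx => by rw [(Finset.mem_filter.1 hx).2], Finset.sum_const,
          Multiset.nsmul_singleton]

theorem le_sum_mcap_iff {t c : ℕ} (htc : t ≤ c) (m : Multiset ℕ) :
    t ≤ (mcap c m).sum ↔ t ≤ m.sum := by
  have := min_sum_mcap c m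
  omega

end Multisets

theorem mem_embFinset {Λ : Type} {T : Template} {G : LGraph Λ} {w : ℕ}
    {f : Fin (T.n + 1) → ℕ} : f ∈ embFinset T G w ↔ IsEmb T G w f := by
  simp only [embFinset, Finset.mem_filter, Fintype.mem_piFinset, and_iff_right_iff_imp]
  exact fun hf u => hf.2.2.1 u

section Formulas

variable {AP : Type}

theorem sat_bigConj (G : LGraph (AP → Bool)) (L : List (GML AP)) (v : ℕ) :
    Sat G (bigConj L) v ↔ ∀ χ ∈ L, Sat G χ v := by
  induction L with
  | nil => simp [bigConj, Sat]
  | cons χ rest ih => simp [bigConj, Sat, ih]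

theorem wf_bigConj (𝒯 : Finset Template) {L : List (GML AP)} (h : ∀ χ ∈ L, χ.Wf 𝒯) :
    (bigConj L).Wf 𝒯 := by
  induction L with
  | nil => trivial
  | cons χ rest ih =>
    exact ⟨h χ List.mem_cons_self, ih fun χ' hχ' => h χ' (List.mem_cons_of_mem _ hχ')⟩

def bigDisj (L : List (GML AP)) : GML AP := .neg (bigConj (L.map .neg))

theorem sat_bigDisj (G : LGraph (AP → Bool)) (L : List (GML AP)) (v : ℕ) :
    Sat G (bigDisj L) v ↔ ∃ χ ∈ L, Sat G χ v := by
  simp [bigDisj, Sat, sat_bigConj]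

theorem wf_bigDisj (𝒯 : Finset Template) {L : List (GML AP)} (h : ∀ χ ∈ L, χ.Wf 𝒯) :
    (bigDisj L).Wf 𝒯 :=
  wf_bigConj 𝒯 fun _ hχ => by
    obtain ⟨ψ, hψ, rfl⟩ := List.mem_map.1 hχ
    exact h ψ hψ

noncomputable def labFormula [Fintype AP] (b : AP → Bool) : GML AP :=
  bigConj ((Finset.univ : Finset AP).toList.map
    fun p => if b p then .prop p else .neg (.prop p))

theorem sat_labFormula [Fintype AP] (G : LGraph (AP → Bool)) (v : ℕ) (b : AP → Bool) :
    Sat G (labFormula b) v ↔ G.lab v = b := by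
  simp only [labFormula, sat_bigConj, List.mem_map, Finset.mem_toList, Finset.mem_univ,
    true_and, forall_exists_index, forall_apply_eq_imp_iff, funext_iff]
  refine forall_congr' fun p => ?_
  cases b p <;> simp [Sat]

theorem wf_labFormula [Fintype AP] (𝒯 : Finset Template) (b : AP → Bool) :
    (labFormula b).Wf 𝒯 :=
  wf_bigConj 𝒯 fun _ hχ => by
    obtain ⟨p, -, rfl⟩ := List.mem_map.1 hχ
    split <;> trivial

end Formulas

section CountingFormulas

variable {AP : Type}

/-- Well-formed modalities have grade `≥ 1`, so grade `0` is expressed by `⊤`. -/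
def atLeast (T : Template) (j : ℕ) (φs : Fin T.n → GML AP) : GML AP :=
  if j = 0 then .top else .dia T j φs

theorem sat_atLeast (G : LGraph (AP → Bool)) (T : Template) (j : ℕ) (φs : Fin T.n → GML AP)
    (v : ℕ) : Sat G (atLeast T j φs) v ↔ j ≤ Scard G T v φs := by
  unfold atLeast
  split_ifs with hj
  · simp [Sat, hj]
  · rfl

theorem wf_atLeast (𝒯 : Finset Template) {T : Template} (hT : T ∈ 𝒯) (j : ℕ)
    {φs : Fin T.n → GML AP} (hφs : ∀ i, (φs i).Wf 𝒯) : (atLeast T j φs).Wf 𝒯 := by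
  unfold atLeast
  split_ifs with hj
  · trivial
  · exact ⟨hT, Nat.one_le_iff_ne_zero.2 hj, hφs⟩

def cappedCountEq (c : ℕ) (T : Template) (φs : Fin T.n → GML AP) (m : ℕ) : GML AP :=
  .and (atLeast T m φs) (if m < c then .neg (atLeast T (m + 1) φs) else .top)

theorem sat_cappedCountEq (G : LGraph (AP → Bool)) {c m : ℕ} (hm : m ≤ c) (T : Template)
    (φs : Fin T.n → GML AP) (v : ℕ) :
    Sat G (cappedCountEq c T φs m) v ↔ min c (Scard G T v φs) = m := by
  unfold cappedCountEq
  split_ifs with hmc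
  · simp only [Sat, sat_atLeast]
    omega
  · simp only [Sat, sat_atLeast, and_true]
    omega

theorem wf_cappedCountEq (𝒯 : Finset Template) (c : ℕ) {T : Template} (hT : T ∈ 𝒯)
    {φs : Fin T.n → GML AP} (hφs : ∀ i, (φs i).Wf 𝒯) (m : ℕ) :
    (cappedCountEq c T φs m).Wf 𝒯 := by
  refine ⟨wf_atLeast 𝒯 hT m hφs, ?_⟩
  split_ifs
  exacts [wf_atLeast 𝒯 hT _ hφs, trivial]

end CountingFormulas

section Refinement

variable {AP R : Type}

def Defines (ψ : R → GML AP) (κ : LGraph (AP → Bool) → ℕ → R) : Prop :=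
  ∀ G v, v ∈ G.verts → ∀ r, Sat G (ψ r) v ↔ κ G v = r

theorem Defines.scard_eq {ψ : R → GML AP} {κ : LGraph (AP → Bool) → ℕ → R} (hψ : Defines ψ κ)
    (G : LGraph (AP → Bool)) (T : Template) (v : ℕ) (τ : Fin T.n → R) :
    Scard G T v (fun i => ψ (τ i)) = #{f ∈ embFinset T G v | (fun i => κ G (f i.succ)) = τ} := by
  refine congrArg Finset.card (Finset.filter_congr fun f hf => ?_)
  simp only [funext_iff]
  exact forall_congr' fun i => hψ G _ ((mem_embFinset.1 hf).2.2.1 _) _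

variable [Fintype R] {nAr : ℕ}

abbrev CountProfile (c : ℕ) (temps : Fin nAr → Template) (R : Type) : Type :=
  (j : Fin nAr) → (Fin (temps j).n → R) → Fin (c + 1)

noncomputable def refineFormula (c : ℕ) (temps : Fin nAr → Template) (ψ : R → GML AP)
    (q : R × CountProfile c temps R) : GML AP :=
  .and (ψ q.1) (bigConj ((Finset.univ : Finset ((j : Fin nAr) × (Fin (temps j).n → R))).toList.map
    fun p => cappedCountEq c (temps p.1) (fun i => ψ (p.2 i)) (q.2 p.1 p.2)))

noncomputable def refineInv (c : ℕ) (temps : Fin nAr → Template) (ψ : R → GML AP)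
    (κ : LGraph (AP → Bool) → ℕ → R) (G : LGraph (AP → Bool)) (v : ℕ) :
    R × CountProfile c temps R :=
  (κ G v, fun j τ => ⟨min c (Scard G (temps j) v fun i => ψ (τ i)),
    Nat.lt_succ_of_le (min_le_left _ _)⟩)

theorem Defines.refine {ψ : R → GML AP} {κ : LGraph (AP → Bool) → ℕ → R} (hψ : Defines ψ κ)
    (c : ℕ) (temps : Fin nAr → Template) :
    Defines (refineFormula c temps ψ) (refineInv c temps ψ κ) := by
  intro G v hv q
  simp only [refineFormula, refineInv, Sat, sat_bigConj, List.forall_mem_map, Finset.mem_toList,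
    Finset.mem_univ, forall_const, Sigma.forall, hψ G v hv, Prod.ext_iff, funext_iff, Fin.ext_iff]
  refine and_congr Iff.rfl (forall₂_congr fun j τ => ?_)
  rw [sat_cappedCountEq G (Nat.lt_succ_iff.1 (q.2 j τ).isLt), eq_comm]

theorem wf_refineFormula (𝒯 : Finset Template) {ψ : R → GML AP} (hψ : ∀ r, (ψ r).Wf 𝒯)
    (c : ℕ) {temps : Fin nAr → Template} (htemps : ∀ j, temps j ∈ 𝒯)
    (q : R × CountProfile c temps R) : (refineFormula c temps ψ q).Wf 𝒯 := by
  refine ⟨hψ q.1, wf_bigConj 𝒯 fun χ hχ => ?_⟩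
  obtain ⟨p, -, rfl⟩ := List.mem_map.1 hχ
  exact wf_cappedCountEq 𝒯 c (htemps p.1) (fun i => hψ _) _

end Refinement

section Features

variable {𝒯 : Finset Template} {d nAr L : ℕ} (N : TGNN 𝒯 d nAr L) {a : ℕ} {R : Type} [Fintype R]

theorem embFinset_initG (T : Template) (G : LGraph (Fin a → Bool)) (v : ℕ) :
    embFinset T (initG d G) v = embFinset T G v :=
  rfl

noncomputable def TGNN.cellFeat (l : Fin L) (c : ℕ) (w : R → Fin d → ℝ)
    (q : R × CountProfile c (N.temp l) R) : Fin d → ℝ :=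
  N.comb l (w q.1) fun j => N.agg l j
    (∑ τ, Multiset.replicate (q.2 j τ) (N.aggT l j (Fin.cons (w q.1) fun i => w (τ i))))

theorem TGNN.feat_succ_eq_cellFeat {c l : ℕ} (hb : N.IsCBounded c) (hl : l < L)
    {ψ : R → GML (Fin a)} {κ : LGraph (Fin a → Bool) → ℕ → R} (hψ : Defines ψ κ)
    {w : R → Fin d → ℝ}
    (hw : ∀ G v, v ∈ G.verts → N.feat (initG d G) l v = w (κ G v))
    (G : LGraph (Fin a → Bool)) {v : ℕ} (hv : v ∈ G.verts) :
    N.feat (initG d G) (l + 1) v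
      = N.cellFeat ⟨l, hl⟩ c w (refineInv c (N.temp ⟨l, hl⟩) ψ κ G v) := by
  rw [TGNN.feat, dif_pos hl, hw G v hv]
  refine congrArg (N.comb _ _) (funext fun j => ?_)
  have hlab : ∀ f ∈ (embFinset (N.temp ⟨l, hl⟩ j) G v).val,
      N.aggT ⟨l, hl⟩ j (fun u => N.feat (initG d G) l (f u))
        = N.aggT ⟨l, hl⟩ j (Fin.cons (w (κ G v)) fun i => w (κ G (f i.succ))) := by
    intro f hf
    obtain ⟨-, hf0, hfG, -⟩ := mem_embFinset.1 hf
    congr 1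
    funext u
    cases u using Fin.cases with
    | zero => rw [Fin.cons_zero, hw G _ (hfG 0), hf0]
    | succ i => rw [Fin.cons_succ, hw G _ (hfG _)]
  have hfiber := Finset.val_map_eq_sum_replicate_card_fiber (embFinset (N.temp ⟨l, hl⟩ j) G v)
    (fun f i => κ G (f i.succ)) fun τ => N.aggT ⟨l, hl⟩ j (Fin.cons (w (κ G v)) fun i => w (τ i))
  beta_reduce at hfiber
  rw [embFinset_initG, Multiset.map_congr rfl hlab, hfiber, hb, ← mcap_sum_replicate_min, ← hb]
  simp only [refineInv, hψ.scard_eq]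

theorem TGNN.exists_defines_feat {c : ℕ} (hb : N.IsCBounded c) (l : ℕ) :
    ∃ (R : Type) (_ : Fintype R) (ψ : R → GML (Fin a)) (κ : LGraph (Fin a → Bool) → ℕ → R)
      (w : R → Fin d → ℝ), (∀ r, (ψ r).Wf 𝒯) ∧ Defines ψ κ ∧
        ∀ G v, v ∈ G.verts → N.feat (initG d G) l v = w (κ G v) := by
  induction l with
  | zero =>
    exact ⟨Fin a → Bool, inferInstance, labFormula, fun G v => G.lab v,
      fun b i => if h : (i : ℕ) < a then boolToReal (b ⟨i, h⟩) else 0,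
      wf_labFormula 𝒯, fun G v _ => sat_labFormula G v, fun _ _ _ => rfl⟩
  | succ l ih =>
    obtain ⟨R, _, ψ, κ, w, hwf, hψ, hw⟩ := ih
    by_cases hl : l < L
    · exact ⟨_, inferInstance, refineFormula c (N.temp ⟨l, hl⟩) ψ,
        refineInv c (N.temp ⟨l, hl⟩) ψ κ, N.cellFeat ⟨l, hl⟩ c w,
        wf_refineFormula 𝒯 hwf c (N.temp_mem _), hψ.refine c _,
        fun G _ hv => N.feat_succ_eq_cellFeat hb hl hψ hw G hv⟩
    · exact ⟨R, inferInstance, ψ, κ, 0, hwf, hψ, fun G v _ => by rw [TGNN.feat, dif_neg hl]; rfl⟩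

theorem TGNN.exists_gml_of_isCBounded {c : ℕ} (hb : N.IsCBounded c) :
    ∃ φ : GML (Fin a), φ.Wf 𝒯 ∧ ∀ G v, v ∈ G.verts →
      (N.cls (N.feat (initG d G) L v) = true ↔ Sat G φ v) := by
  obtain ⟨R, _, ψ, κ, w, hwf, hψ, hw⟩ := N.exists_defines_feat hb L
  refine ⟨bigDisj (({r | N.cls (w r) = true} : Finset R).toList.map ψ), wf_bigDisj 𝒯 ?_,
    fun G v hv => ?_⟩
  · simp [hwf]
  · simp [sat_bigDisj, hψ G v hv, hw G v hv]

end Features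

section Diamonds

variable {AP : Type}

abbrev Diamond (AP : Type) : Type := (T : Template) × ℕ × (Fin T.n → GML AP)

def Diamond.toGML (e : Diamond AP) : GML AP := .dia e.1 e.2.1 e.2.2

def GML.diamonds : GML AP → List (Diamond AP)
  | .top => []
  | .prop _ => []
  | .neg ψ => ψ.diamonds
  | .and ψ χ => ψ.diamonds ++ χ.diamonds
  | .dia T k ψs => ⟨T, k, ψs⟩ :: (List.ofFn fun i => (ψs i).diamonds).flatten

@[simp]
theorem GML.mem_diamonds_dia {e : Diamond AP} {T : Template} {k : ℕ} {ψs : Fin T.n → GML AP} :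
    e ∈ (GML.dia T k ψs).diamonds ↔ e = ⟨T, k, ψs⟩ ∨ ∃ i, e ∈ (ψs i).diamonds := by
  simp [GML.diamonds, List.mem_flatten]

theorem GML.diamonds_subset_of_mem {φ : GML AP} {e : Diamond AP} (he : e ∈ φ.diamonds)
    (i : Fin e.1.n) : (e.2.2 i).diamonds ⊆ φ.diamonds := by
  induction φ with
  | top | prop => simp [GML.diamonds] at he
  | neg ψ ih => exact ih he
  | and ψ χ ihψ ihχ =>
    simp only [GML.diamonds, List.mem_append] at he
    rcases he with he | he
    · exact List.Subset.trans (ihψ he) (List.subset_append_left _ _)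
    · exact List.Subset.trans (ihχ he) (List.subset_append_right _ _)
  | dia T k ψs ih =>
    intro e' he'
    rw [GML.mem_diamonds_dia] at he ⊢
    rcases he with rfl | ⟨j, he⟩
    · exact Or.inr ⟨i, he'⟩
    · exact Or.inr ⟨j, ih j he he'⟩

theorem GML.Wf.template_mem {𝒯 : Finset Template} {φ : GML AP} (hφ : φ.Wf 𝒯)
    {e : Diamond AP} (he : e ∈ φ.diamonds) : e.1 ∈ 𝒯 := by
  induction φ with
  | top | prop => simp [GML.diamonds] at he
  | neg ψ ih => exact ih hφ he
  | and ψ χ ihψ ihχ =>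
    simp only [GML.diamonds, List.mem_append] at he
    exact he.elim (ihψ hφ.1) (ihχ hφ.2)
  | dia T k ψs ih =>
    rw [GML.mem_diamonds_dia] at he
    rcases he with rfl | ⟨i, he⟩
    exacts [hφ.1, ih i (hφ.2.2 i) he]

theorem Diamond.md_arg_lt (e : Diamond AP) (i : Fin e.1.n) : (e.2.2 i).md < e.toGML.md := by
  have := Finset.le_sup (f := fun i => (e.2.2 i).md) (Finset.mem_univ i)
  simp only [Diamond.toGML, GML.md]
  omega

theorem Diamond.one_le_md (e : Diamond AP) : 1 ≤ e.toGML.md := by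
  simp [Diamond.toGML, GML.md]

end Diamonds

section Reading

variable {a : ℕ} (D : List (Diamond (Fin a)))

/-- Reads a formula off a feature vector holding the truth values of the propositions in
its first `a` coordinates and those of the diamonds `D` in the remaining ones. -/
def Holds (x : Fin (a + D.length) → ℝ) : GML (Fin a) → Prop
  | .top => True
  | .prop p => x (Fin.castAdd _ p) = 1
  | .neg ψ => ¬ Holds x ψ
  | .and ψ χ => Holds x ψ ∧ Holds x χ
  | .dia T k ψs => ∃ i, D.get i = ⟨T, k, ψs⟩ ∧ x (Fin.natAdd a i) = 1

def Encodes (x : Fin (a + D.length) → ℝ) (G : LGraph (Fin a → Bool)) (v b : ℕ) : Prop :=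
  (∀ p, x (Fin.castAdd _ p) = 1 ↔ G.lab v p = true) ∧
    ∀ i, (D.get i).toGML.md ≤ b → (x (Fin.natAdd a i) = 1 ↔ Sat G (D.get i).toGML v)

variable {D}

theorem Encodes.holds_iff {x : Fin (a + D.length) → ℝ} {G : LGraph (Fin a → Bool)} {v b : ℕ}
    (hx : Encodes D x G v b) {ψ : GML (Fin a)} (hψ : ψ.md ≤ b) (hD : ψ.diamonds ⊆ D) :
    Holds D x ψ ↔ Sat G ψ v := by
  induction ψ with
  | top => exact Iff.rfl
  | prop p => exact hx.1 p
  | neg ψ ih => exact not_congr (ih hψ hD)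
  | and ψ χ ihψ ihχ =>
    simp only [GML.md, max_le_iff, GML.diamonds, List.append_subset] at hψ hD
    exact and_congr (ihψ hψ.1 hD.1) (ihχ hψ.2 hD.2)
  | dia T k ψs =>
    constructor
    · rintro ⟨i, hi, h1⟩
      have := hx.2 i (hi ▸ hψ)
      rw [hi] at this
      exact this.1 h1
    · intro h
      obtain ⟨i, hi⟩ := List.mem_iff_get.1 (hD (GML.mem_diamonds_dia.2 (Or.inl rfl)))
      have := hx.2 i (hi ▸ hψ)
      rw [hi] at this
      exact ⟨i, hi, this.2 h⟩

end Reading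

section RootAutomorphisms

def Template.rootAut (T : Template) : Subgroup (Equiv.Perm (Fin (T.n + 1))) where
  carrier := {σ | σ 0 = 0 ∧ (∀ p, p ∈ T.pos ↔ (σ p.1, σ p.2) ∈ T.pos) ∧
    ∀ p, p ∈ T.neg ↔ (σ p.1, σ p.2) ∈ T.neg}
  mul_mem' := by
    rintro σ τ ⟨hσ0, hσpos, hσneg⟩ ⟨hτ0, hτpos, hτneg⟩
    exact ⟨by simp [hσ0, hτ0], fun p => (hτpos p).trans (hσpos _),
      fun p => (hτneg p).trans (hσneg _)⟩
  one_mem' := ⟨rfl, fun _ => Iff.rfl, fun _ => Iff.rfl⟩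
  inv_mem' := by
    rintro σ ⟨hσ0, hσpos, hσneg⟩
    refine ⟨by rw [Equiv.Perm.inv_eq_iff_eq, hσ0], fun p => ?_, fun p => ?_⟩
    · simpa using (hσpos (σ⁻¹ p.1, σ⁻¹ p.2)).symm
    · simpa using (hσneg (σ⁻¹ p.1, σ⁻¹ p.2)).symm

variable {T : Template}

theorem Template.rootAut_apply_succ_ne_zero {σ : Equiv.Perm (Fin (T.n + 1))}
    (hσ : σ ∈ T.rootAut) (i : Fin T.n) : σ i.succ ≠ 0 := by
  rw [← hσ.1, Ne, σ.apply_eq_iff_eq]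
  exact Fin.succ_ne_zero i

theorem IsEmb.comp_rootAut {Λ : Type} {G : LGraph Λ} {w : ℕ} {f : Fin (T.n + 1) → ℕ}
    (hf : IsEmb T G w f) {σ : Equiv.Perm (Fin (T.n + 1))} (hσ : σ ∈ T.rootAut) :
    IsEmb T G w (f ∘ σ) := by
  obtain ⟨hinj, h0, hverts, hpos, hneg⟩ := hf
  exact ⟨hinj.comp σ.injective, by simp [hσ.1, h0], fun _ => hverts _,
    fun p hp => hpos _ ((hσ.2.1 p).1 hp), fun p hp => hneg _ ((hσ.2.2 p).1 hp)⟩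

/-- Symmetrising over `T.rootAut` makes this invariant under root automorphisms, as a
template aggregation must be. -/
noncomputable def Template.autCount (T : Template) {X : Type} (P : Fin T.n → X → Prop)
    (lab : Fin (T.n + 1) → X) : ℕ :=
  #{σ : T.rootAut | ∀ i, P i (lab ((σ : Equiv.Perm _) i.succ))}

theorem Template.autCount_congr {X Y : Type} {P : Fin T.n → X → Prop} {Q : Fin T.n → Y → Prop}
    {lab₁ : Fin (T.n + 1) → X} {lab₂ : Fin (T.n + 1) → Y} (h : ∀ i u, P i (lab₁ u) ↔ Q i (lab₂ u)) :
    T.autCount P lab₁ = T.autCount Q lab₂ := by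
  simp only [Template.autCount, h]

theorem Template.autCount_eq_of_mem_rootAut {X : Type} (P : Fin T.n → X → Prop)
    {σ₀ : Equiv.Perm (Fin (T.n + 1))} (hσ₀ : σ₀ ∈ T.rootAut) {lab₁ lab₂ : Fin (T.n + 1) → X}
    (hlab : ∀ u, u ≠ 0 → lab₁ u = lab₂ (σ₀ u)) : T.autCount P lab₁ = T.autCount P lab₂ :=
  Finset.card_equiv (Equiv.mulLeft ⟨σ₀, hσ₀⟩) fun σ => by
    simp only [Finset.mem_filter, Finset.mem_univ, true_and, Equiv.coe_mulLeft,
      Subgroup.coe_mul, Equiv.Perm.mul_apply, hlab _ (T.rootAut_apply_succ_ne_zero σ.2 _)]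

theorem Template.sum_autCount_embFinset {Λ : Type} (G : LGraph Λ) (v : ℕ)
    (P : Fin T.n → ℕ → Prop) :
    ∑ f ∈ embFinset T G v, T.autCount P f
      = Fintype.card T.rootAut * #{f ∈ embFinset T G v | ∀ i, P i (f i.succ)} := by
  rw [← Finset.card_univ, ← smul_eq_mul, ← Finset.sum_const]
  simp only [Template.autCount, Finset.card_filter]
  rw [Finset.sum_comm]
  refine Finset.sum_congr rfl fun σ _ => ?_
  simp only [← Finset.card_filter]
  refine (Finset.card_equiv (Equiv.arrowCongr (σ : Equiv.Perm (Fin (T.n + 1))) (Equiv.refl ℕ))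
    fun f => ?_).symm
  have harrow : ∀ u, Equiv.arrowCongr (σ : Equiv.Perm (Fin (T.n + 1))) (Equiv.refl ℕ) f u
      = f ((σ : Equiv.Perm (Fin (T.n + 1))).symm u) := fun _ => rfl
  simp only [Finset.mem_filter, mem_embFinset, harrow, Equiv.symm_apply_apply]
  refine and_congr ⟨fun hf => hf.comp_rootAut (σ⁻¹).2, fun hf => ?_⟩ Iff.rfl
  simpa [Function.comp_def] using hf.comp_rootAut σ.2

end RootAutomorphisms

section Construction

variable {a : ℕ}

/-- `Template.autCount` counts every satisfying embedding once per root automorphism. -/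
noncomputable def Diamond.threshold {AP : Type} (e : Diamond AP) : ℕ :=
  Fintype.card e.1.rootAut * e.2.1

noncomputable def GML.gnnBound (φ : GML (Fin a)) : ℕ :=
  ∑ k, (φ.diamonds.get k).threshold + 1

noncomputable def GML.toTGNN {𝒯 : Finset Template} (φ : GML (Fin a)) (hφ : φ.Wf 𝒯) :
    TGNN 𝒯 (a + φ.diamonds.length) φ.diamonds.length φ.md where
  temp _ k := (φ.diamonds.get k).1
  temp_mem _ k := hφ.template_mem (List.get_mem _ _)
  aggT _ k lab _ :=
    (φ.diamonds.get k).1.autCount (fun i x => Holds φ.diamonds x ((φ.diamonds.get k).2.2 i)) lab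
  aggT_inv _ k _ _ _ h0 hpos hneg hlab := by
    rw [Template.autCount_eq_of_mem_rootAut _ ⟨h0, hpos, hneg⟩ hlab]
  agg _ k m _ := boolToReal (decide (((φ.diamonds.get k).threshold : ℝ)
    ≤ ((mcap φ.gnnBound m).map fun x => x (Fin.natAdd a k)).sum))
  comb _ x ys := Fin.addCases (fun p => x (Fin.castAdd _ p)) fun k => ys k (Fin.natAdd a k)
  cls x := decide (Holds φ.diamonds x φ)

variable {𝒯 : Finset Template} (φ : GML (Fin a)) (hφ : φ.Wf 𝒯)

theorem GML.toTGNN_isCBounded : (φ.toTGNN hφ).IsCBounded φ.gnnBound :=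
  fun _ _ m => by simp only [GML.toTGNN, mcap_idem]

theorem boolToReal_eq_one {b : Bool} : boolToReal b = 1 ↔ b = true := by
  cases b <;> simp [boolToReal]

theorem GML.toTGNN_comb (l : Fin φ.md) (x : Fin (a + φ.diamonds.length) → ℝ)
    (ys : Fin φ.diamonds.length → Fin (a + φ.diamonds.length) → ℝ) :
    (φ.toTGNN hφ).comb l x ys
      = Fin.addCases (fun p => x (Fin.castAdd _ p)) fun k => ys k (Fin.natAdd a k) :=
  rfl

theorem GML.toTGNN_agg (l : Fin φ.md) (k : Fin φ.diamonds.length)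
    (m : Multiset (Fin (a + φ.diamonds.length) → ℝ)) :
    (φ.toTGNN hφ).agg l k m = fun _ => boolToReal (decide (((φ.diamonds.get k).threshold : ℝ)
      ≤ ((mcap φ.gnnBound m).map fun x => x (Fin.natAdd a k)).sum)) :=
  rfl

theorem GML.toTGNN_feat_succ_castAdd {l : ℕ} (hl : l < φ.md) (G : LGraph (Fin a → Bool))
    (w : ℕ) (p : Fin a) :
    (φ.toTGNN hφ).feat (initG _ G) (l + 1) w (Fin.castAdd _ p)
      = (φ.toTGNN hφ).feat (initG _ G) l w (Fin.castAdd _ p) := by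
  rw [TGNN.feat, dif_pos hl]
  simp [GML.toTGNN]

theorem GML.toTGNN_aggT_multiset_eq {l : ℕ} (hl : l < φ.md) {G : LGraph (Fin a → Bool)}
    (henc : ∀ w ∈ G.verts, Encodes φ.diamonds ((φ.toTGNN hφ).feat (initG _ G) l w) G w l)
    (v : ℕ) (k : Fin φ.diamonds.length) (hk : (φ.diamonds.get k).toGML.md ≤ l + 1) :
    (embFinset ((φ.toTGNN hφ).temp ⟨l, hl⟩ k) (initG (a + φ.diamonds.length) G) v).val.map
        (fun f => (φ.toTGNN hφ).aggT ⟨l, hl⟩ k fun u =>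
          (φ.toTGNN hφ).feat (initG (a + φ.diamonds.length) G) l (f u))
      = ((embFinset (φ.diamonds.get k).1 G v).val.map
          ((φ.diamonds.get k).1.autCount fun i y => Sat G ((φ.diamonds.get k).2.2 i) y)).map
          fun (n : ℕ) (_ : Fin (a + φ.diamonds.length)) => (n : ℝ) := by
  rw [Multiset.map_map]
  refine Multiset.map_congr rfl fun f hf => funext fun _ => ?_
  refine congrArg Nat.cast (Template.autCount_congr fun i u => ?_)
  refine (henc _ ((mem_embFinset.1 hf).2.2.1 u)).holds_iff ?_ ?_
  · have := (φ.diamonds.get k).md_arg_lt i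
    omega
  · exact φ.diamonds_subset_of_mem (List.get_mem _ _) i

theorem GML.toTGNN_feat_succ_natAdd_eq_one_iff {l : ℕ} (hl : l < φ.md)
    {G : LGraph (Fin a → Bool)}
    (henc : ∀ w ∈ G.verts, Encodes φ.diamonds ((φ.toTGNN hφ).feat (initG _ G) l w) G w l)
    (v : ℕ) (k : Fin φ.diamonds.length) (hk : (φ.diamonds.get k).toGML.md ≤ l + 1) :
    (φ.toTGNN hφ).feat (initG _ G) (l + 1) v (Fin.natAdd a k) = 1
      ↔ Sat G (φ.diamonds.get k).toGML v := by
  have hconst : Function.Injective fun (n : ℕ) (_ : Fin (a + φ.diamonds.length)) => (n : ℝ) :=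
    fun n m h => Nat.cast_injective (congrFun h (Fin.natAdd a k))
  have hthreshold : (φ.diamonds.get k).threshold ≤ φ.gnnBound :=
    le_trans (Finset.single_le_sum (f := fun k => (φ.diamonds.get k).threshold)
      (fun _ _ => Nat.zero_le _) (Finset.mem_univ k)) (Nat.le_succ _)
  have hcast : ((fun x => x (Fin.natAdd a k)) ∘
      fun (n : ℕ) (_ : Fin (a + φ.diamonds.length)) => (n : ℝ)) = Nat.cast := rfl
  rw [TGNN.feat, dif_pos hl]
  simp only [GML.toTGNN_comb, Fin.addCases_right]
  rw [φ.toTGNN_aggT_multiset_eq hφ hl henc v k hk, GML.toTGNN_agg, boolToReal_eq_one,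
    decide_eq_true_iff, mcap_map_of_injective hconst, Multiset.map_map, hcast,
    ← Nat.cast_multiset_sum, Nat.cast_le, le_sum_mcap_iff hthreshold]
  change _ ≤ ∑ f ∈ embFinset _ G v, _ ↔ _
  rw [Template.sum_autCount_embFinset, Diamond.threshold,
    Nat.mul_le_mul_left_iff Fintype.card_pos]
  rfl

theorem GML.encodes_toTGNN_feat (G : LGraph (Fin a → Bool)) {l : ℕ} (hl : l ≤ φ.md) :
    ∀ w ∈ G.verts, Encodes φ.diamonds ((φ.toTGNN hφ).feat (initG _ G) l w) G w l := by
  induction l with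
  | zero =>
    refine fun w _ => ⟨fun p => ?_, fun k hk => absurd hk ?_⟩
    · simp [TGNN.feat, initG, boolToReal_eq_one]
    · have := (φ.diamonds.get k).one_le_md
      omega
  | succ l ih =>
    have henc := ih (Nat.le_of_succ_le hl)
    refine fun w hw =>
      ⟨fun p => ?_, fun k hk => φ.toTGNN_feat_succ_natAdd_eq_one_iff hφ hl henc w k hk⟩
    rw [φ.toTGNN_feat_succ_castAdd hφ hl]
    exact (henc w hw).1 p

theorem GML.toTGNN_cls_iff (G : LGraph (Fin a → Bool)) {v : ℕ} (hv : v ∈ G.verts) :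
    (φ.toTGNN hφ).cls ((φ.toTGNN hφ).feat (initG _ G) φ.md v) = true ↔ Sat G φ v :=
  decide_eq_true_iff.trans
    ((φ.encodes_toTGNN_feat hφ G le_rfl v hv).holds_iff le_rfl (List.Subset.refl _))

end Construction

/-- A Boolean node classifier on finite pointed labelled graphs over a
fixed finite proposition set is computed by some bounded `𝒯`-GNN iff it is definable by
some `GML(𝒯)` formula. -/
theorem bounded_gnn_iff_gml {a : ℕ} (𝒯 : Finset Template)
    (F : LGraph (Fin a → Bool) → ℕ → Bool) :
    (∃ (d nAr L : ℕ) (N : TGNN 𝒯 d nAr L) (c : ℕ), 1 ≤ c ∧ N.IsCBounded c ∧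
        ∀ (G : LGraph (Fin a → Bool)) (v : ℕ), v ∈ G.verts →
          F G v = N.cls (N.feat (initG d G) L v))
    ↔ (∃ φ : GML (Fin a), φ.Wf 𝒯 ∧
        ∀ (G : LGraph (Fin a → Bool)) (v : ℕ), v ∈ G.verts →
          (F G v = true ↔ Sat G φ v)) := by
  constructor
  · rintro ⟨d, nAr, L, N, c, -, hb, hF⟩
    obtain ⟨φ, hφ, hN⟩ := N.exists_gml_of_isCBounded hb
    exact ⟨φ, hφ, fun G v hv => hF G v hv ▸ hN G v hv⟩
  · rintro ⟨φ, hφ, hF⟩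
    refine ⟨_, _, _, φ.toTGNN hφ, φ.gnnBound, Nat.le_add_left _ _, φ.toTGNN_isCBounded hφ,
      fun G v hv => ?_⟩
    rw [Bool.eq_iff_iff, hF G v hv, φ.toTGNN_cls_iff hφ G hv]
end

section
/- Let G₁ be the directed 3-cycle on vertices {0,1,2} with edges (0,1),(1,2),(2,0), and G₂ the directed 6-cycle on vertices {0,…,5} with edges (i, i+1 mod 6), all nodes of both graphs carrying the same constant label. Let T₁ be the edge template ({r,a}, E⁺={(r,a)}, E⁻=∅, root r) and T△ the triangle template ({r,a,b}, E⁺={(r,a),(a,b),(b,r)}, E⁻=∅, root r). Then for every l ∈ ℕ and all nodes v ∈ G₁, w ∈ G₂, the pointed graphs (G₁,v) and (G₂,w) are graded l-{T₁}-bisimilar (hence indistinguishable by standard 1-WL), but (G₁,v) and (G₂,w) are not graded 1-{T△}-bisimilar. -/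
set_option maxHeartbeats 1000000

attribute [local instance 10] Classical.propDecidable

/-!
Every vertex of a directed cycle has exactly one out-neighbour, so each vertex admits exactly
one embedding of the edge template `T₁`; hence the relation relating all vertices of one cycle
to all vertices of another is a graded `{T₁}`-bisimulation of every depth. The triangle
template, however, embeds at every vertex of the 3-cycle and nowhere in the 6-cycle, so
already the first forth step fails.
-/

namespace LGraph

variable {Λ : Type} (G : LGraph Λ)

def IsFunctional : Prop :=
  ∀ v a b, G.edge v a → G.edge v b → a = b

def HasNonloopSuccessors : Prop :=
  ∀ v ∈ G.verts, ∃ a, v ≠ a ∧ G.edge v a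

end LGraph

section Embeddings

variable {Λ : Type} {G G' : LGraph Λ}

theorem forth_of_emb_subsingleton {Z : ℕ → ℕ → Prop} {T : Template} {v v' : ℕ}
    (huniq : ∀ f g, IsEmb T G v f → IsEmb T G v g → f = g)
    {f' : Fin (T.n + 1) → ℕ} (hf' : IsEmb T G' v' f')
    (hZ : ∀ f, IsEmb T G v f → ∀ u, Z (f u) (f' u)) (k : ℕ) :
    Forth Z T G G' v v' k := by
  intro F hF hemb
  exact ⟨fun _ => f', fun i j _ => hF (huniq _ _ (hemb i) (hemb j)), fun _ => hf',
    fun i => hZ _ (hemb i)⟩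

theorem isEmb_T1_of_edge {v a : ℕ} (hne : v ≠ a) (he : G.edge v a) :
    IsEmb T1 G v ![v, a] := by
  refine ⟨?_, rfl, ?_, ?_, ?_⟩
  · intro i j h
    fin_cases i <;> fin_cases j <;>
      first | rfl | exact absurd h hne | exact absurd h.symm hne
  · intro i
    fin_cases i
    exacts [(G.edge_mem _ _ he).1, (G.edge_mem _ _ he).2]
  · intro p hp
    rw [show p = (0, 1) from Finset.mem_singleton.mp hp]
    exact he
  · intro p hp
    exact absurd hp (Finset.notMem_empty _)

theorem LGraph.IsFunctional.isEmb_T1_unique (hG : G.IsFunctional) {v : ℕ}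
    {f g : Fin (T1.n + 1) → ℕ} (hf : IsEmb T1 G v f) (hg : IsEmb T1 G v g) : f = g := by
  obtain ⟨-, hf0, -, hfe, -⟩ := hf
  obtain ⟨-, hg0, -, hge, -⟩ := hg
  have hf1 := hfe (0, 1) (Finset.mem_singleton_self _)
  have hg1 := hge (0, 1) (Finset.mem_singleton_self _)
  simp only [hf0, hg0] at hf1 hg1
  funext i
  fin_cases i
  exacts [hf0.trans hg0.symm, hG v _ _ hf1 hg1]

theorem forth_T1_of_isFunctional {Z : ℕ → ℕ → Prop} {v v' : ℕ}
    (hG : G.IsFunctional) (hG' : G'.HasNonloopSuccessors) (hv' : v' ∈ G'.verts)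
    (hZ : ∀ a ∈ G.verts, ∀ b ∈ G'.verts, Z a b) (k : ℕ) :
    Forth Z T1 G G' v v' k := by
  obtain ⟨a', hne', he'⟩ := hG' v' hv'
  have hf' := isEmb_T1_of_edge hne' he'
  exact forth_of_emb_subsingleton (fun _ _ => hG.isEmb_T1_unique) hf'
    (fun f hf u => hZ _ (hf.2.2.1 u) _ (hf'.2.2.1 u)) k

theorem isBisimP_T1_of_isFunctional [Subsingleton Λ]
    (hG : G.IsFunctional) (hG' : G'.IsFunctional) (hsG : G.HasNonloopSuccessors)
    (hsG' : G'.HasNonloopSuccessors) (P : ℕ → Prop) (l : ℕ) :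
    IsBisimP {T1} P G G' l (fun a b => a ∈ G.verts ∧ b ∈ G'.verts) := by
  induction l with
  | zero => exact fun _ _ _ => Subsingleton.elim _ _
  | succ l ih =>
    refine ⟨_, ih, fun v v' hvv' => ⟨hvv', fun T hT k _ => ?_⟩⟩
    rw [Finset.mem_singleton.mp hT]
    exact ⟨forth_T1_of_isFunctional hG hsG' hvv'.2 (fun _ ha _ hb => ⟨ha, hb⟩) k,
      forth_T1_of_isFunctional hG' hsG hvv'.1 (fun _ hb _ ha => ⟨ha, hb⟩) k⟩

theorem not_gBisimilar_of_isEmb {𝒯 : Finset Template} {T : Template} (hT : T ∈ 𝒯)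
    {v v' : ℕ} {f : Fin (T.n + 1) → ℕ} (hf : IsEmb T G v f)
    (hG' : ∀ f', ¬ IsEmb T G' v' f') (l : ℕ) : ¬ GBisimilar 𝒯 (l + 1) G v G' v' := by
  rintro ⟨Z, ⟨Z', -, hstep⟩, hvv'⟩
  obtain ⟨hforth, -⟩ := (hstep v v' hvv').2 T hT 1 le_rfl
  obtain ⟨F', -, hF', -⟩ :=
    hforth (fun _ => f) (Function.injective_of_subsingleton _) (fun _ => hf)
  exact hG' _ (hF' 0)

theorem isEmb_Ttri_of_edges {v a b : ℕ}
    (hva : v ≠ a) (hvb : v ≠ b) (hab : a ≠ b)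
    (h₁ : G.edge v a) (h₂ : G.edge a b) (h₃ : G.edge b v) :
    IsEmb Ttri G v ![v, a, b] := by
  refine ⟨?_, rfl, ?_, ?_, ?_⟩
  · intro i j h
    fin_cases i <;> fin_cases j <;>
      first | rfl | exact absurd h ‹_› | exact absurd h.symm ‹_›
  · intro i
    fin_cases i
    exacts [(G.edge_mem _ _ h₁).1, (G.edge_mem _ _ h₁).2, (G.edge_mem _ _ h₂).2]
  · intro p hp
    fin_cases hp
    exacts [h₁, h₂, h₃]
  · intro p hp
    exact absurd hp (Finset.notMem_empty _)

end Embeddings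

theorem G3_isFunctional : G3.IsFunctional := by
  rintro v a b (⟨rfl, rfl⟩ | ⟨rfl, rfl⟩ | ⟨rfl, rfl⟩) <;>
    rintro (⟨h, rfl⟩ | ⟨h, rfl⟩ | ⟨h, rfl⟩) <;> omega

theorem G6_isFunctional : G6.IsFunctional :=
  fun _ _ _ ha hb => ha.2.trans hb.2.symm

theorem G3_hasNonloopSuccessors : G3.HasNonloopSuccessors := by
  intro v hv
  simp only [G3, Finset.mem_insert, Finset.mem_singleton] at hv ⊢
  exact ⟨(v + 1) % 3, by omega, by omega⟩

theorem G6_hasNonloopSuccessors : G6.HasNonloopSuccessors := by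
  intro v hv
  have hv : v < 6 := Finset.mem_range.mp hv
  exact ⟨(v + 1) % 6, by omega, hv, rfl⟩

theorem exists_isEmb_Ttri_G3 {v : ℕ} (hv : v ∈ G3.verts) : ∃ f, IsEmb Ttri G3 v f := by
  simp only [G3, Finset.mem_insert, Finset.mem_singleton] at hv
  exact ⟨_, isEmb_Ttri_of_edges (a := (v + 1) % 3) (b := (v + 2) % 3) (by omega) (by omega)
    (by omega) (by simp only [G3]; omega) (by simp only [G3]; omega) (by simp only [G3]; omega)⟩

/-- Three steps along the 6-cycle advance by `3 ≢ 0 (mod 6)`. -/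
theorem not_isEmb_Ttri_G6 (w : ℕ) (f : Fin (Ttri.n + 1) → ℕ) : ¬ IsEmb Ttri G6 w f := by
  rintro ⟨-, -, -, he, -⟩
  obtain ⟨-, e₁⟩ : G6.edge (f 0) (f 1) := he (0, 1) (by decide)
  obtain ⟨-, e₂⟩ : G6.edge (f 1) (f 2) := he (1, 2) (by decide)
  obtain ⟨-, e₃⟩ : G6.edge (f 2) (f 0) := he (2, 0) (by decide)
  omega

/-- Any node of the directed 3-cycle and any node of the directed
6-cycle (with constant labels) are graded `l`-`{T₁}`-bisimilar for every `l` (hence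
indistinguishable by standard 1-WL), but they are not graded `1`-`{T△}`-bisimilar. -/
theorem cycles_separated_by_triangle_template (l : ℕ) (v w : ℕ)
    (hv : v ∈ G3.verts) (hw : w ∈ G6.verts) :
    GBisimilar {T1} l G3 v G6 w ∧ ¬ GBisimilar {Ttri} 1 G3 v G6 w := by
  refine ⟨⟨_, isBisimP_T1_of_isFunctional G3_isFunctional G6_isFunctional
    G3_hasNonloopSuccessors G6_hasNonloopSuccessors _ l, hv, hw⟩, ?_⟩
  obtain ⟨f, hf⟩ := exists_isEmb_Ttri_G3 hv
  exact not_gBisimilar_of_isEmb (Finset.mem_singleton_self _) hf (not_isEmb_Ttri_G6 w) 0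
end
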